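/- arXiv:2109.09000 — 7 statements merged into one kernel-verified Lean document; each statement's English description precedes it below -/
import Mathlib

section
/- Let A be an n×n complex matrix and λ a complex number. If there exist complex numbers c_1,...,c_n such that |a_{i,i} - c_i - λ| > Σ_{j≠i} |a_{i,j} - c_i| for all i ∈ [n], then rank(A - λI) ≥ n - 1. -/
/-! Subtracting the rank-one matrix whose `i`-th row is constantly `c i` turns the hypothesis into
strict diagonal dominance of the rows, so by Gershgorin that matrix is invertible; since
subtracting a rank-one matrix lowers the rank by at most one, `A - λI` has rank at least `n - 1`. -/

namespace Matrix

theorem rank_sub_le {K m n : Type*} [Field K] [Fintype m] [Fintype n] (A B : Matrix m n K) :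
    (A - B).rank ≤ A.rank + B.rank := by
  have hrange : LinearMap.range (A - B).mulVecLin ≤
      LinearMap.range A.mulVecLin ⊔ LinearMap.range B.mulVecLin := by
    rintro _ ⟨v, rfl⟩
    rw [mulVecLin_apply, sub_mulVec]
    exact Submodule.sub_mem_sup ⟨v, rfl⟩ ⟨v, rfl⟩
  exact (Submodule.finrank_mono hrange).trans (Submodule.finrank_add_le_finrank_add_finrank _ _)

theorem rank_eq_card_of_sum_row_lt_diag {K n : Type*} [NormedField K] [Fintype n] [DecidableEq n]
    {A : Matrix n n K} (h : ∀ k, ∑ j ∈ Finset.univ.erase k, ‖A k j‖ < ‖A k k‖) :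
    A.rank = Fintype.card n :=
  rank_of_isUnit A ((isUnit_iff_isUnit_det A).mpr (det_ne_zero_of_sum_row_lt_diag h).isUnit)

end Matrix

open Matrix

theorem smaller_gershgorin_rank_bound (n : ℕ) (A : Matrix (Fin n) (Fin n) ℂ) (lam : ℂ)
    (c : Fin n → ℂ)
    (h : ∀ i : Fin n,
      ∑ j ∈ Finset.univ.erase i, ‖A i j - c i‖ <
        ‖A i i - c i - lam‖) :
    n - 1 ≤ (A - lam • (1 : Matrix (Fin n) (Fin n) ℂ)).rank := by
  set B := A - lam • (1 : Matrix (Fin n) (Fin n) ℂ) - vecMulVec c 1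
  have hdominant : ∀ k, ∑ j ∈ Finset.univ.erase k, ‖B k j‖ < ‖B k k‖ := by
    intro k
    have hoff : ∀ j ∈ Finset.univ.erase k, B k j = A k j - c k := fun j hj => by
      simp [B, one_apply_ne (Finset.ne_of_mem_erase hj).symm]
    have hdiag : B k k = A k k - c k - lam := by
      simp [B, sub_right_comm]
    rw [Finset.sum_congr rfl fun j hj => congrArg norm (hoff j hj), hdiag]
    exact h k
  have hfull : n ≤ (A - lam • (1 : Matrix (Fin n) (Fin n) ℂ)).rank + 1 :=
    calc n = B.rank := by simpa using (rank_eq_card_of_sum_row_lt_diag hdominant).symm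
      _ ≤ _ := (rank_sub_le _ _).trans (Nat.add_le_add_left (rank_vecMulVec_le _ _) _)
  omega
end

section
/- Let A be an n×n complex matrix and suppose there exist complex numbers c_1,...,c_n and e_1,...,e_n such that the matrix D with entries d_{i,j} = a_{i,j} - c_i - e_j is strictly diagonally dominant, i.e., |d_{i,i}| > Σ_{j≠i} |d_{i,j}| for all i. Then rank(A) ≥ n - 2. -/
/-!
Gershgorin makes `D` invertible, so `rank D = n`. The shift `(c i + e j)` is the sum of the two
rank-one matrices `c 1ᵀ` and `1 eᵀ`, and rank is subadditive, so
`n = rank D ≤ rank A + 2`.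
-/

namespace Matrix

variable {m n K : Type*} [Fintype n] [Field K]

theorem rank_add_le (X Y : Matrix m n K) : (X + Y).rank ≤ X.rank + Y.rank := by
  have hrange : LinearMap.range (X + Y).mulVecLin ≤
      LinearMap.range X.mulVecLin ⊔ LinearMap.range Y.mulVecLin := by
    rintro _ ⟨v, rfl⟩
    rw [mulVecLin_add]
    exact Submodule.add_mem_sup ⟨v, rfl⟩ ⟨v, rfl⟩
  exact (Submodule.finrank_mono hrange).trans (Submodule.finrank_add_le_finrank_add_finrank _ _)

theorem rank_of_add_le_two (c : m → K) (e : n → K) : (of fun i j => c i + e j).rank ≤ 2 := by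
  have hsplit : (of fun i j => c i + e j) = vecMulVec c 1 + vecMulVec 1 e := by
    ext i j; simp
  rw [hsplit]
  exact (rank_add_le _ _).trans (add_le_add (rank_vecMulVec_le _ _) (rank_vecMulVec_le _ _))

end Matrix

theorem rank_ge_sub_two_of_doubly_shifted_diag_dominant (n : ℕ)
    (A D : Matrix (Fin n) (Fin n) ℂ) (c e : Fin n → ℂ)
    (hD : ∀ i j : Fin n, D i j = A i j - c i - e j)
    (h : ∀ i : Fin n,
      ∑ j ∈ Finset.univ.erase i, ‖D i j‖ < ‖D i i‖) :
    n - 2 ≤ A.rank := by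
  have hDrank : D.rank = n := by
    simpa using Matrix.rank_of_det_ne_zero (det_ne_zero_of_sum_row_lt_diag h)
  have hsplit : D = A + Matrix.of fun i j => -c i + -e j := by
    ext i j; rw [hD, Matrix.add_apply, Matrix.of_apply]; ring
  have hsub : D.rank ≤ A.rank + _ :=
    hsplit ▸ Matrix.rank_add_le A (Matrix.of fun i j => -c i + -e j)
  have hshift := Matrix.rank_of_add_le_two (fun i => -c i) (fun j => -e j)
  omega
end

section
/- Let b_1,...,b_m be real numbers, f(t) = Σ_{j=1}^m |b_j − t|, and let a, λ be real numbers. If for every point t₀ that is an endpoint of the median interval of the b_j we have |a − t₀ − λ| ≤ f(t₀), then |a − t − λ| ≤ f(t) for all real t. -/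
open Finset

/-- Lower-side slope bound: for `t ≤ s`,
`f t ≥ f s + (s - t) * (#{j | s ≤ b j} - #{j | b j < s})`. -/
lemma key_lower {m : ℕ} (b : Fin m → ℝ) {t s : ℝ} (ht : t ≤ s) :
    (∑ j : Fin m, |b j - s|) + (s - t) *
      (((univ.filter (fun j => s ≤ b j)).card : ℝ)
        - ((univ.filter (fun j => b j < s)).card : ℝ)) ≤ ∑ j : Fin m, |b j - t| := by
  have hsplit : (∑ j : Fin m, |b j - s|) + (s - t) *
      (((univ.filter (fun j => s ≤ b j)).card : ℝ)
        - ((univ.filter (fun j => b j < s)).card : ℝ))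
      = ∑ j : Fin m, (|b j - s| + if s ≤ b j then s - t else t - s) := by
    rw [Finset.sum_add_distrib]
    congr 1
    rw [Finset.sum_ite, Finset.sum_const, Finset.sum_const]
    have : Finset.filter (fun j => ¬ s ≤ b j) univ = Finset.filter (fun j => b j < s) univ := by
      simp [not_le]
    rw [this]
    simp only [nsmul_eq_mul]
    ring
  rw [hsplit]
  apply Finset.sum_le_sum
  intro j _
  by_cases hj : s ≤ b j
  · rw [if_pos hj]
    have h1 : |b j - s| = b j - s := abs_of_nonneg (by linarith)
    have h2 : |b j - t| = b j - t := abs_of_nonneg (by linarith)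
    linarith
  · rw [if_neg hj]
    have := abs_sub_abs_le_abs_sub (b j - s) (b j - t)
    have h3 : |(b j - s) - (b j - t)| = s - t := by
      rw [show (b j - s) - (b j - t) = -(s - t) by ring, abs_neg, abs_of_nonneg (by linarith)]
    linarith

/-- Exact value when `t'` is between all points below `s` and `s` itself. -/
lemma key_lower_eq {m : ℕ} (b : Fin m → ℝ) {t' s : ℝ} (ht : t' ≤ s)
    (hB : ∀ j, b j < s → b j ≤ t') :
    (∑ j : Fin m, |b j - t'|) = (∑ j : Fin m, |b j - s|) + (s - t') *
      (((univ.filter (fun j => s ≤ b j)).card : ℝ)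
        - ((univ.filter (fun j => b j < s)).card : ℝ)) := by
  have hsplit : (∑ j : Fin m, |b j - s|) + (s - t') *
      (((univ.filter (fun j => s ≤ b j)).card : ℝ)
        - ((univ.filter (fun j => b j < s)).card : ℝ))
      = ∑ j : Fin m, (|b j - s| + if s ≤ b j then s - t' else t' - s) := by
    rw [Finset.sum_add_distrib]
    congr 1
    rw [Finset.sum_ite, Finset.sum_const, Finset.sum_const]
    have : Finset.filter (fun j => ¬ s ≤ b j) univ = Finset.filter (fun j => b j < s) univ := by
      simp [not_le]
    rw [this]
    simp only [nsmul_eq_mul]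
    ring
  rw [hsplit]
  apply Finset.sum_congr rfl
  intro j _
  by_cases hj : s ≤ b j
  · rw [if_pos hj]
    have h1 : |b j - s| = b j - s := abs_of_nonneg (by linarith)
    have h2 : |b j - t'| = b j - t' := abs_of_nonneg (by linarith)
    linarith
  · rw [if_neg hj]
    push_neg at hj
    have hbt := hB j hj
    have h1 : |b j - s| = s - b j := by rw [abs_sub_comm]; exact abs_of_nonneg (by linarith)
    have h2 : |b j - t'| = t' - b j := by rw [abs_sub_comm]; exact abs_of_nonneg (by linarith)
    linarith

/-- Upper-side slope bound: for `s ≤ t`,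
`f t ≥ f s + (t - s) * (#{j | b j ≤ s} - #{j | s < b j})`. -/
lemma key_upper {m : ℕ} (b : Fin m → ℝ) {t s : ℝ} (ht : s ≤ t) :
    (∑ j : Fin m, |b j - s|) + (t - s) *
      (((univ.filter (fun j => b j ≤ s)).card : ℝ)
        - ((univ.filter (fun j => s < b j)).card : ℝ)) ≤ ∑ j : Fin m, |b j - t| := by
  have hsplit : (∑ j : Fin m, |b j - s|) + (t - s) *
      (((univ.filter (fun j => b j ≤ s)).card : ℝ)
        - ((univ.filter (fun j => s < b j)).card : ℝ))
      = ∑ j : Fin m, (|b j - s| + if b j ≤ s then t - s else s - t) := by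
    rw [Finset.sum_add_distrib]
    congr 1
    rw [Finset.sum_ite, Finset.sum_const, Finset.sum_const]
    have : Finset.filter (fun j => ¬ b j ≤ s) univ = Finset.filter (fun j => s < b j) univ := by
      simp [not_le]
    rw [this]
    simp only [nsmul_eq_mul]
    ring
  rw [hsplit]
  apply Finset.sum_le_sum
  intro j _
  by_cases hj : b j ≤ s
  · rw [if_pos hj]
    have h1 : |b j - s| = s - b j := by rw [abs_sub_comm]; exact abs_of_nonneg (by linarith)
    have h2 : |b j - t| = t - b j := by rw [abs_sub_comm]; exact abs_of_nonneg (by linarith)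
    linarith
  · rw [if_neg hj]
    have := abs_sub_abs_le_abs_sub (b j - s) (b j - t)
    have h3 : |(b j - s) - (b j - t)| = t - s := by
      rw [show (b j - s) - (b j - t) = t - s by ring]
      exact abs_of_nonneg (by linarith)
    linarith

/-- Exact value when `t'` is between `s` and all points above `s`. -/
lemma key_upper_eq {m : ℕ} (b : Fin m → ℝ) {t' s : ℝ} (ht : s ≤ t')
    (hB : ∀ j, s < b j → t' ≤ b j) :
    (∑ j : Fin m, |b j - t'|) = (∑ j : Fin m, |b j - s|) + (t' - s) *
      (((univ.filter (fun j => b j ≤ s)).card : ℝ)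
        - ((univ.filter (fun j => s < b j)).card : ℝ)) := by
  have hsplit : (∑ j : Fin m, |b j - s|) + (t' - s) *
      (((univ.filter (fun j => b j ≤ s)).card : ℝ)
        - ((univ.filter (fun j => s < b j)).card : ℝ))
      = ∑ j : Fin m, (|b j - s| + if b j ≤ s then t' - s else s - t') := by
    rw [Finset.sum_add_distrib]
    congr 1
    rw [Finset.sum_ite, Finset.sum_const, Finset.sum_const]
    have : Finset.filter (fun j => ¬ b j ≤ s) univ = Finset.filter (fun j => s < b j) univ := by
      simp [not_le]
    rw [this]
    simp only [nsmul_eq_mul]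
    ring
  rw [hsplit]
  apply Finset.sum_congr rfl
  intro j _
  by_cases hj : b j ≤ s
  · rw [if_pos hj]
    have h1 : |b j - s| = s - b j := by rw [abs_sub_comm]; exact abs_of_nonneg (by linarith)
    have h2 : |b j - t'| = t' - b j := by rw [abs_sub_comm]; exact abs_of_nonneg (by linarith)
    linarith
  · rw [if_neg hj]
    push_neg at hj
    have hbt := hB j hj
    have h1 : |b j - s| = b j - s := abs_of_nonneg (by linarith)
    have h2 : |b j - t'| = b j - t' := abs_of_nonneg (by linarith)
    linarith

theorem check_at_median_endpoints_suffices (m : ℕ) (hm : 1 ≤ m) (b : Fin m → ℝ)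
    (a lam : ℝ) (f : ℝ → ℝ) (hf : f = fun t => ∑ j : Fin m, |b j - t|)
    (h : ∀ t₀ ∈ ({sInf {t : ℝ | IsMinOn f Set.univ t},
                  sSup {t : ℝ | IsMinOn f Set.univ t}} : Set ℝ),
      |a - t₀ - lam| ≤ f t₀) :
    ∀ t : ℝ, |a - t - lam| ≤ f t := by
  subst hf
  set f : ℝ → ℝ := fun t => ∑ j : Fin m, |b j - t| with hf
  set S : Set ℝ := {t : ℝ | IsMinOn f Set.univ t} with hS
  have j0 : Fin m := ⟨0, hm⟩
  -- single term bound
  have hterm : ∀ t : ℝ, |b j0 - t| ≤ f t := by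
    intro t
    exact Finset.single_le_sum (f := fun j => |b j - t|) (fun i _ => abs_nonneg _)
      (Finset.mem_univ j0)
  -- continuity
  have hcont : Continuous f := by
    apply continuous_finset_sum
    intro i _
    exact (continuous_const.sub continuous_id).abs
  -- existence of a global minimizer
  have hSne : S.Nonempty := by
    set c := f (b j0) with hc
    have hc0 : (0:ℝ) ≤ c := le_trans (abs_nonneg _) (hterm (b j0))
    have hbmem : b j0 ∈ Set.Icc (b j0 - c) (b j0 + c) := ⟨by linarith, by linarith⟩
    obtain ⟨x₀, hx₀mem, hx₀⟩ := isCompact_Icc.exists_isMinOn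
      (s := Set.Icc (b j0 - c) (b j0 + c)) ⟨b j0, hbmem⟩ hcont.continuousOn
    refine ⟨x₀, ?_⟩
    intro y _
    by_cases hy : y ∈ Set.Icc (b j0 - c) (b j0 + c)
    · exact hx₀ hy
    · have h1 : c < |b j0 - y| := by
        by_contra hcon
        push_neg at hcon
        apply hy
        rw [abs_le] at hcon
        constructor <;> linarith [hcon.1, hcon.2]
      have h2 : f x₀ ≤ c := hx₀ hbmem
      calc f x₀ ≤ c := h2
        _ ≤ |b j0 - y| := le_of_lt h1
        _ ≤ f y := hterm y
  obtain ⟨s₀, hs₀⟩ := hSne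
  have hs₀min : ∀ x, f s₀ ≤ f x := fun x => hs₀ (Set.mem_univ x)
  -- S is closed and bounded
  have hSclosed : IsClosed S := by
    have : S = ⋂ x : ℝ, {t : ℝ | f t ≤ f x} := by
      ext t
      simp only [hS, Set.mem_setOf_eq, Set.mem_iInter, isMinOn_iff]
      constructor
      · intro ht x; exact ht x (Set.mem_univ x)
      · intro ht x _; exact ht x
    rw [this]
    exact isClosed_iInter fun x => isClosed_le hcont continuous_const
  have hSbdd : ∀ s ∈ S, b j0 - f s₀ ≤ s ∧ s ≤ b j0 + f s₀ := by
    intro s hsmem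
    have h1 : f s ≤ f s₀ := hsmem (Set.mem_univ s₀)
    have h2 : |b j0 - s| ≤ f s₀ := le_trans (hterm s) h1
    rw [abs_le] at h2
    constructor <;> linarith [h2.1, h2.2]
  have hSbddBelow : BddBelow S := ⟨b j0 - f s₀, fun s hsm => (hSbdd s hsm).1⟩
  have hSbddAbove : BddAbove S := ⟨b j0 + f s₀, fun s hsm => (hSbdd s hsm).2⟩
  set tlo := sInf S with htlo
  set thi := sSup S with hthi
  have htloS : tlo ∈ S := hSclosed.csInf_mem ⟨s₀, hs₀⟩ hSbddBelow
  have hthiS : thi ∈ S := hSclosed.csSup_mem ⟨s₀, hs₀⟩ hSbddAbove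
  have htlomin : ∀ x, f tlo ≤ f x := fun x => htloS (Set.mem_univ x)
  have hthimin : ∀ x, f thi ≤ f x := fun x => hthiS (Set.mem_univ x)
  have htlothi : tlo ≤ thi := csInf_le_csSup ⟨s₀, hs₀⟩ hSbddBelow hSbddAbove
  have hhlo : |a - tlo - lam| ≤ f tlo := h tlo (Or.inl rfl)
  have hhhi : |a - thi - lam| ≤ f thi := h thi (Or.inr rfl)
  intro t
  rcases lt_trichotomy t tlo with hcase | hcase | hcase
  · -- t < tlo
    set A := univ.filter (fun j => tlo ≤ b j) with hA
    set B := univ.filter (fun j => b j < tlo) with hB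
    have hcard : B.card < A.card := by
      by_contra hcon
      push_neg at hcon
      -- find t' < tlo which is also a minimizer
      by_cases hBne : B.Nonempty
      · set t' := B.sup' hBne b with ht'
        have ht'lt : t' < tlo := by
          rw [ht', Finset.sup'_lt_iff]
          intro j hj
          exact (Finset.mem_filter.mp hj).2
        have hble : ∀ j, b j < tlo → b j ≤ t' := by
          intro j hj
          exact Finset.le_sup' b (Finset.mem_filter.mpr ⟨Finset.mem_univ j, hj⟩)
        have heq := key_lower_eq b (le_of_lt ht'lt) hble
        rw [← hA, ← hB] at heq
        have hnonpos : ((A.card : ℝ) - B.card) ≤ 0 := by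
          have : (A.card : ℝ) ≤ B.card := by exact_mod_cast hcon
          linarith
        have hft' : f t' ≤ f tlo := by
          show (∑ j : Fin m, |b j - t'|) ≤ ∑ j : Fin m, |b j - tlo|
          rw [heq]
          have : (tlo - t') * ((A.card : ℝ) - B.card) ≤ 0 :=
            mul_nonpos_of_nonneg_of_nonpos (by linarith) hnonpos
          linarith
        have ht'S : t' ∈ S := by
          intro y _
          exact le_trans hft' (htlomin y)
        have := csInf_le hSbddBelow ht'S
        rw [← htlo] at this
        linarith
      · -- B empty: then A = univ has card m ≥ 1 > 0 = B.card
        rw [Finset.not_nonempty_iff_eq_empty] at hBne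
        have hAuniv : A = univ := by
          ext j
          simp only [hA, Finset.mem_filter, Finset.mem_univ, true_and, iff_true]
          by_contra hj
          push_neg at hj
          have : j ∈ B := Finset.mem_filter.mpr ⟨Finset.mem_univ j, hj⟩
          rw [hBne] at this
          exact absurd this (Finset.notMem_empty j)
        rw [hBne, hAuniv] at hcon
        simp at hcon
        omega
    have hK : (1 : ℝ) ≤ (A.card : ℝ) - B.card := by
      have : B.card + 1 ≤ A.card := hcard
      have : (B.card : ℝ) + 1 ≤ (A.card : ℝ) := by exact_mod_cast this
      linarith
    have hlow := key_lower b (le_of_lt hcase) (s := tlo)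
    rw [← hA, ← hB] at hlow
    have hft : f tlo + (tlo - t) ≤ f t := by
      have h1 : (tlo - t) * 1 ≤ (tlo - t) * ((A.card : ℝ) - B.card) :=
        mul_le_mul_of_nonneg_left hK (by linarith)
      show (∑ j : Fin m, |b j - tlo|) + (tlo - t) ≤ ∑ j : Fin m, |b j - t|
      linarith
    calc |a - t - lam| ≤ |a - tlo - lam| + |tlo - t| := by
          rw [show a - t - lam = (a - tlo - lam) + (tlo - t) by ring]
          exact abs_add_le _ _
      _ = |a - tlo - lam| + (tlo - t) := by
          rw [abs_of_nonneg (show (0:ℝ) ≤ tlo - t by linarith)]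
      _ ≤ f tlo + (tlo - t) := by linarith
      _ ≤ f t := hft
  · -- t = tlo
    rw [hcase]; exact hhlo
  · rcases le_or_gt t thi with hcase2 | hcase2
    · -- tlo < t ≤ thi : middle case
      have h1 : f tlo ≤ f t := htlomin t
      have h2 : f thi ≤ f t := hthimin t
      rw [abs_le] at hhlo hhhi ⊢
      constructor
      · linarith [hhhi.1]
      · linarith [hhlo.2]
    · -- thi < t
      set A := univ.filter (fun j => b j ≤ thi) with hA
      set B := univ.filter (fun j => thi < b j) with hB
      have hcard : B.card < A.card := by
        by_contra hcon
        push_neg at hcon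
        by_cases hBne : B.Nonempty
        · set t' := B.inf' hBne b with ht'
          have ht'gt : thi < t' := by
            rw [ht', Finset.lt_inf'_iff]
            intro j hj
            exact (Finset.mem_filter.mp hj).2
          have hble : ∀ j, thi < b j → t' ≤ b j := by
            intro j hj
            exact Finset.inf'_le b (Finset.mem_filter.mpr ⟨Finset.mem_univ j, hj⟩)
          have heq := key_upper_eq b (le_of_lt ht'gt) hble
          rw [← hA, ← hB] at heq
          have hnonpos : ((A.card : ℝ) - B.card) ≤ 0 := by
            have : (A.card : ℝ) ≤ B.card := by exact_mod_cast hcon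
            linarith
          have hft' : f t' ≤ f thi := by
            show (∑ j : Fin m, |b j - t'|) ≤ ∑ j : Fin m, |b j - thi|
            rw [heq]
            have : (t' - thi) * ((A.card : ℝ) - B.card) ≤ 0 :=
              mul_nonpos_of_nonneg_of_nonpos (by linarith) hnonpos
            linarith
          have ht'S : t' ∈ S := by
            intro y _
            exact le_trans hft' (hthimin y)
          have := le_csSup hSbddAbove ht'S
          rw [← hthi] at this
          linarith
        · rw [Finset.not_nonempty_iff_eq_empty] at hBne
          have hAuniv : A = univ := by
            ext j
            simp only [hA, Finset.mem_filter, Finset.mem_univ, true_and, iff_true]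
            by_contra hj
            push_neg at hj
            have : j ∈ B := Finset.mem_filter.mpr ⟨Finset.mem_univ j, hj⟩
            rw [hBne] at this
            exact absurd this (Finset.notMem_empty j)
          rw [hBne, hAuniv] at hcon
          simp at hcon
          omega
      have hK : (1 : ℝ) ≤ (A.card : ℝ) - B.card := by
        have : B.card + 1 ≤ A.card := hcard
        have : (B.card : ℝ) + 1 ≤ (A.card : ℝ) := by exact_mod_cast this
        linarith
      have hlow := key_upper b (le_of_lt hcase2) (s := thi)
      rw [← hA, ← hB] at hlow
      have hft : f thi + (t - thi) ≤ f t := by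
        have h1 : (t - thi) * 1 ≤ (t - thi) * ((A.card : ℝ) - B.card) :=
          mul_le_mul_of_nonneg_left hK (by linarith)
        show (∑ j : Fin m, |b j - thi|) + (t - thi) ≤ ∑ j : Fin m, |b j - t|
        linarith
      calc |a - t - lam| ≤ |a - thi - lam| + |thi - t| := by
            rw [show a - t - lam = (a - thi - lam) + (thi - t) by ring]
            exact abs_add_le _ _
        _ = |a - thi - lam| + (t - thi) := by
            have : |thi - t| = t - thi := by
              rw [abs_sub_comm]; exact abs_of_nonneg (by linarith)
            rw [this]
        _ ≤ f thi + (t - thi) := by linarith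
        _ ≤ f t := hft
end

section
/- Let d ≥ 1 and 0 < ε < 2/(3d+5). Suppose (p_1,q_1),...,(p_k,q_k) are pairs of points in ℝ^d such that ‖p_i − q_i‖² = 4 for every i, and for all i ≠ j: |‖p_i − q_j‖² − 2| ≤ ε, |‖p_i − p_j‖² − 2| ≤ ε, and |‖q_i − q_j‖² − 2| ≤ ε. Then k ≤ d + 2. -/
open RealInnerProductSpace Finset

theorem octahedron_stability (d k : ℕ) (hd : 1 ≤ d) (ε : ℝ) (hε0 : 0 < ε)
    (hε : ε < 2 / (3 * d + 5))
    (p q : Fin k → EuclideanSpace ℝ (Fin d))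
    (hpq : ∀ i : Fin k, ‖p i - q i‖ ^ 2 = 4)
    (h1 : ∀ i j : Fin k, i ≠ j → |‖p i - q j‖ ^ 2 - 2| ≤ ε)
    (h2 : ∀ i j : Fin k, i ≠ j → |‖p i - p j‖ ^ 2 - 2| ≤ ε)
    (h3 : ∀ i j : Fin k, i ≠ j → |‖q i - q j‖ ^ 2 - 2| ≤ ε) :
    k ≤ d + 2 := by
  by_contra hk
  push_neg at hk
  have hk' : d + 1 ≤ k := by omega
  set w : Fin k → EuclideanSpace ℝ (Fin d) := fun i => p i - q i with hwdef
  have hεd : (d : ℝ) * (2 * ε) < 4 := by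
    have hden : (0:ℝ) < 3 * d + 5 := by positivity
    have h2' : ε * (3 * d + 5) < 2 := by
      rw [div_eq_mul_inv] at hε
      calc ε * (3 * d + 5) < 2 / (3 * d + 5) * (3 * d + 5) := by
            apply mul_lt_mul_of_pos_right _ hden
            rw [div_eq_mul_inv]; exact hε
        _ = 2 := by field_simp
    nlinarith [hε0, (Nat.one_le_cast (α := ℝ)).mpr hd]
  have hoff : ∀ i j : Fin k, i ≠ j → |(inner ℝ (w i) (w j) : ℝ)| ≤ 2 * ε := by
    intro i j hij
    have key : 2 * (inner ℝ (w i) (w j) : ℝ) =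
        ‖p i - q j‖ ^ 2 + ‖q i - p j‖ ^ 2 - ‖p i - p j‖ ^ 2 - ‖q i - q j‖ ^ 2 := by
      simp only [hwdef, norm_sub_sq_real, inner_sub_left, inner_sub_right]
      ring
    have ha := h1 i j hij
    have hb := h1 j i hij.symm
    have hb' : |‖q i - p j‖ ^ 2 - 2| ≤ ε := by rwa [norm_sub_rev (q i)]  -- ‖q i - p j‖ = ‖p j - q i‖
    have hc := h2 i j hij
    have hd' := h3 i j hij
    rw [abs_le] at ha hb' hc hd' ⊢
    constructor <;> nlinarith [key]
  have hdiag : ∀ i : Fin k, (inner ℝ (w i) (w i) : ℝ) = 4 := by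
    intro i
    have := hpq i
    rw [← real_inner_self_eq_norm_sq] at this
    exact this
  let e : Fin (d + 1) → Fin k := fun i => ⟨i.1, by omega⟩
  have hli : LinearIndependent ℝ (w ∘ e) := by
    rw [Fintype.linearIndependent_iff]
    intro g hg
    by_contra hgz
    push_neg at hgz
    obtain ⟨i1, hi1⟩ := hgz
    obtain ⟨i0, -, hi0⟩ := Finset.exists_max_image (univ : Finset (Fin (d+1))) (fun i => |g i|)
      ⟨i1, mem_univ _⟩
    have hpos : 0 < |g i0| := lt_of_lt_of_le (abs_pos.mpr hi1) (hi0 i1 (mem_univ _))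
    have h0 : ∑ i, g i * (inner ℝ (w (e i)) (w (e i0)) : ℝ) = 0 := by
      have : (inner ℝ (∑ i, g i • w (e i)) (w (e i0)) : ℝ) = 0 := by
        rw [show (∑ i, g i • w (e i)) = 0 from hg]; simp
      rw [sum_inner] at this
      simp only [real_inner_smul_left] at this
      exact this
    rw [← Finset.add_sum_erase _ _ (mem_univ i0)] at h0
    rw [hdiag] at h0
    have hbound : |g i0 * 4| ≤ ∑ i ∈ univ.erase i0, |g i| * (2 * ε) := by
      have : g i0 * 4 = -∑ i ∈ univ.erase i0, g i * (inner ℝ (w (e i)) (w (e i0)) : ℝ) := by linarith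
      rw [this, abs_neg]
      calc |∑ i ∈ univ.erase i0, g i * (inner ℝ (w (e i)) (w (e i0)) : ℝ)|
          ≤ ∑ i ∈ univ.erase i0, |g i * (inner ℝ (w (e i)) (w (e i0)) : ℝ)| := Finset.abs_sum_le_sum_abs _ _
        _ ≤ ∑ i ∈ univ.erase i0, |g i| * (2 * ε) := by
            apply Finset.sum_le_sum
            intro i hi
            rw [abs_mul]
            apply mul_le_mul_of_nonneg_left _ (abs_nonneg _)
            apply hoff
            intro hcon
            have : i = i0 := by
              have := congrArg Fin.val hcon
              exact Fin.ext this
            exact (Finset.mem_erase.mp hi).1 this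
    have hsum : ∑ i ∈ univ.erase i0, |g i| * (2 * ε) ≤ (d : ℝ) * (|g i0| * (2 * ε)) := by
      calc ∑ i ∈ univ.erase i0, |g i| * (2 * ε)
          ≤ ∑ _i ∈ univ.erase i0, |g i0| * (2 * ε) := by
            apply Finset.sum_le_sum
            intro i hi
            exact mul_le_mul_of_nonneg_right (hi0 i (mem_univ _)) (by positivity)
        _ = (d : ℝ) * (|g i0| * (2 * ε)) := by
            rw [Finset.sum_const, Finset.card_erase_of_mem (mem_univ _)]
            simp [nsmul_eq_mul]
    rw [abs_mul, abs_of_nonneg (by norm_num : (0:ℝ) ≤ 4)] at hbound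
    nlinarith [hpos]
  have hcard := hli.fintype_card_le_finrank
  rw [Fintype.card_fin, finrank_euclideanSpace, Fintype.card_fin] at hcard
  omega
end

section
/- Let H be an n×n Hadamard matrix (entries ±1 with H Hᵀ = n I), and let d = n − 2. Project each of the 2n rows of ±(1/√d) H to ℝ^d by deleting the last two coordinates, obtaining points ±u_1,...,±u_n. Then the squared distance between antipodal points u_i and −u_i is 4, and for i ≠ j the squared distances ‖u_i − u_j‖², ‖u_i + u_j‖² all lie in the interval [2 − 4/d, 2 + 4/d]. -/
theorem hadamard_projection_distances (n d : ℕ) (hd : 1 ≤ d) (hnd : n = d + 2)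
    (H : Matrix (Fin n) (Fin n) ℝ)
    (hent : ∀ i j : Fin n, H i j = 1 ∨ H i j = -1)
    (hHad : H * H.transpose = (n : ℝ) • (1 : Matrix (Fin n) (Fin n) ℝ))
    (u : Fin n → EuclideanSpace ℝ (Fin d))
    (hu : ∀ (i : Fin n) (j : Fin d),
      u i j = (1 / Real.sqrt d) * H i ⟨j, by omega⟩) :
    (∀ i : Fin n, ‖u i - (-(u i))‖ ^ 2 = 4) ∧
    (∀ i j : Fin n, i ≠ j →
      ‖u i - u j‖ ^ 2 ∈ Set.Icc (2 - 4 / (d : ℝ)) (2 + 4 / (d : ℝ)) ∧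
      ‖u i + u j‖ ^ 2 ∈ Set.Icc (2 - 4 / (d : ℝ)) (2 + 4 / (d : ℝ))) := by
  subst hnd
  have hd0 : (0:ℝ) < d := by exact_mod_cast hd
  have hsq : (0:ℝ) < Real.sqrt d := Real.sqrt_pos.mpr hd0
  have hsqsq : Real.sqrt d * Real.sqrt d = d := Real.mul_self_sqrt hd0.le
  set S : Fin (d+2) → Fin (d+2) → ℝ :=
    fun i j => ∑ k : Fin d, H i k.castSucc.castSucc * H j k.castSucc.castSucc with hS
  have hinner : ∀ i j, (inner ℝ (u i) (u j) : ℝ) = (1/(d:ℝ)) * S i j := by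
    intro i j
    rw [PiLp.inner_apply]
    have : ∀ k : Fin d, (⟨(k:ℕ), by omega⟩ : Fin (d+2)) = k.castSucc.castSucc := by
      intro k; rfl
    simp only [RCLike.inner_apply, conj_trivial, hu, this]
    rw [hS, Finset.mul_sum]
    apply Finset.sum_congr rfl
    intro k _
    field_simp
    rw [Real.sq_sqrt hd0.le]; ring
  have hSii : ∀ i, S i i = d := by
    intro i
    rw [hS]
    have : ∀ k : Fin d, H i k.castSucc.castSucc * H i k.castSucc.castSucc = 1 := by
      intro k
      rcases hent i k.castSucc.castSucc with h | h <;> rw [h] <;> norm_num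
    simp [this]
  have hnorm : ∀ i, ‖u i‖ ^ 2 = 1 := by
    intro i
    rw [← real_inner_self_eq_norm_sq, hinner, hSii]
    field_simp
  have hSbd : ∀ i j, i ≠ j → |S i j| ≤ 2 := by
    intro i j hij
    have horth : ∑ k : Fin (d+2), H i k * H j k = 0 := by
      have := congrFun (congrFun hHad i) j
      rw [Matrix.mul_apply] at this
      simpa [Matrix.one_apply, hij, Matrix.transpose_apply] using this
    rw [Fin.sum_univ_castSucc, Fin.sum_univ_castSucc] at horth
    have hE : ∀ a b : Fin (d+2), |H a b| ≤ 1 := by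
      intro a b; rcases hent a b with h | h <;> rw [h] <;> norm_num
    have h1 : |H i (Fin.last d).castSucc * H j (Fin.last d).castSucc| ≤ 1 := by
      rw [abs_mul]
      calc |H i (Fin.last d).castSucc| * |H j (Fin.last d).castSucc| ≤ 1 * 1 :=
            mul_le_mul (hE _ _) (hE _ _) (abs_nonneg _) zero_le_one
        _ = 1 := by ring
    have h2 : |H i (Fin.last (d+1)) * H j (Fin.last (d+1))| ≤ 1 := by
      rw [abs_mul]
      calc |H i (Fin.last (d+1))| * |H j (Fin.last (d+1))| ≤ 1 * 1 :=
            mul_le_mul (hE _ _) (hE _ _) (abs_nonneg _) zero_le_one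
        _ = 1 := by ring
    have : S i j = -(H i (Fin.last d).castSucc * H j (Fin.last d).castSucc
        + H i (Fin.last (d+1)) * H j (Fin.last (d+1))) := by
      rw [hS]; linarith [horth]
    rw [this]
    rw [abs_neg]
    calc |H i (Fin.last d).castSucc * H j (Fin.last d).castSucc
        + H i (Fin.last (d+1)) * H j (Fin.last (d+1))|
        ≤ _ + _ := abs_add_le _ _
      _ ≤ 2 := by linarith
  constructor
  · intro i
    rw [sub_neg_eq_add, norm_add_sq_real, hnorm, real_inner_self_eq_norm_sq, hnorm]
    ring
  · intro i j hij
    have hb := hSbd i j hij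
    rw [abs_le] at hb
    have key : (0:ℝ) < d := hd0
    have hpos : (0:ℝ) ≤ 1/(d:ℝ) := by positivity
    have hi2 : (1/(d:ℝ)) * S i j ≤ 2/d := by
      calc (1/(d:ℝ)) * S i j ≤ (1/(d:ℝ)) * 2 := mul_le_mul_of_nonneg_left hb.2 hpos
        _ = 2/d := by ring
    have hi1 : -(2/(d:ℝ)) ≤ (1/(d:ℝ)) * S i j := by
      calc -(2/(d:ℝ)) = (1/(d:ℝ)) * (-2) := by ring
        _ ≤ (1/(d:ℝ)) * S i j := mul_le_mul_of_nonneg_left hb.1 hpos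
    constructor
    · rw [norm_sub_sq_real, hnorm, hnorm, hinner, Set.mem_Icc]
      constructor
      · have : 4/(d:ℝ) = 2*(2/d) := by ring
        rw [this]; linarith
      · have : 4/(d:ℝ) = 2*(2/d) := by ring
        rw [this]; linarith
    · rw [norm_add_sq_real, hnorm, hnorm, hinner, Set.mem_Icc]
      constructor
      · have : 4/(d:ℝ) = 2*(2/d) := by ring
        rw [this]; linarith
      · have : 4/(d:ℝ) = 2*(2/d) := by ring
        rw [this]; linarith
end

section
/- (Bound on a zero-sum weighted row sum.) Let a_{i,1},...,a_{i,n} be real numbers and t_1,...,t_n complex numbers with Σ_{j=1}^n t_j = 0 and |t_j| ≤ 1 for all j. Set S = Σ_{j≠i} a_{i,j} t_j. Then |S| ≤ r_i, where r_i = min_{x∈ℝ} ( |x| + Σ_{j≠i} |a_{i,j} − x| ), which equals |t_i^{med}| + Σ_{j≠i}|a_{i,j} − t_i^{med}| for t_i^{med} a median of the numbers a_{i,1},...,a_{i,i−1}, 0, a_{i,i+1},...,a_{i,n}. -/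
/-!
Since the weights sum to zero, `∑_{j ≠ i} t_j = -t_i`, so for every real `x`
`S = ∑_{j ≠ i} (a_{i,j} - x) t_j - x t_i`; the triangle inequality and `|t_j| ≤ 1` then give
`|S| ≤ ∑_{j ≠ i} |a_{i,j} - x| + |x|`.
-/

open Finset

theorem Finset.sum_erase_mul_eq_sum_sub_mul_sub {R ι : Type*} [Ring R] [DecidableEq ι]
    {s : Finset ι} {i : ι} (hi : i ∈ s) {t : ι → R} (hsum : ∑ j ∈ s, t j = 0)
    (a : ι → R) (x : R) :
    ∑ j ∈ s.erase i, a j * t j = ∑ j ∈ s.erase i, (a j - x) * t j - x * t i := by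
  simp only [sub_mul, sum_sub_distrib, ← mul_sum, sum_erase_eq_sub hi, hsum]
  noncomm_ring

theorem norm_sum_mul_le_sum_norm {R ι : Type*} [SeminormedRing R] (s : Finset ι)
    (c t : ι → R) (ht : ∀ j ∈ s, ‖t j‖ ≤ 1) :
    ‖∑ j ∈ s, c j * t j‖ ≤ ∑ j ∈ s, ‖c j‖ :=
  (norm_sum_le _ _).trans <| sum_le_sum fun j hj =>
    (norm_mul_le _ _).trans <| mul_le_of_le_one_right (norm_nonneg _) (ht j hj)

theorem zero_sum_weighted_row_sum_bound (n : ℕ) (i : Fin n) (a : Fin n → ℝ)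
    (t : Fin n → ℂ) (hsum : ∑ j : Fin n, t j = 0)
    (hbd : ∀ j : Fin n, ‖t j‖ ≤ 1) :
    ∀ x : ℝ,
      ‖∑ j ∈ Finset.univ.erase i, (a j : ℂ) * t j‖ ≤
        |x| + ∑ j ∈ Finset.univ.erase i, |a j - x| := by
  intro x
  rw [sum_erase_mul_eq_sum_sub_mul_sub (mem_univ i) hsum _ (x : ℂ)]
  calc ‖∑ j ∈ univ.erase i, ((a j : ℂ) - x) * t j - x * t i‖
      ≤ ‖∑ j ∈ univ.erase i, ((a j : ℂ) - x) * t j‖ + ‖(x : ℂ) * t i‖ := norm_sub_le _ _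
    _ ≤ ∑ j ∈ univ.erase i, ‖(a j : ℂ) - x‖ + ‖(x : ℂ)‖ :=
        add_le_add (norm_sum_mul_le_sum_norm _ _ _ fun j _ => hbd j)
          ((norm_mul_le _ _).trans (mul_le_of_le_one_right (norm_nonneg _) (hbd i)))
    _ = |x| + ∑ j ∈ univ.erase i, |a j - x| := by
        simp only [← Complex.ofReal_sub, Complex.norm_real, Real.norm_eq_abs, add_comm]
end

section
/- Let A be a real normal n×n matrix with n ≥ 3, and let λ and μ be two distinct (complex) eigenvalues of A. Then there exists i ∈ [n] such that |μ − a_{i,i}| ≤ r_i + √n·|λ − μ| (and by symmetry both λ and μ lie in the disk D(a_{i,i}, r_i + √n·|λ − μ|)). -/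
/-!
Normality makes eigenvectors `v`, `w` for `λ ≠ μ` orthogonal. Then `u = (∑ w) v - (∑ v) w`
(or `w` itself when `∑ w = 0`) is a nonzero vector with coordinate sum `0`, and
`A u - μ u = (λ - μ) (∑ w) v` has norm at most `|λ - μ| ‖u‖` by Pythagoras. Look at row `i` of
this equation, where `|u i|` is maximal: because `∑ u = 0`, every off-diagonal entry may be
shifted by the same `x`, giving
`|μ - a_ii| |u i| ≤ (|x| + ∑_{j ≠ i} |a_ij - x|) |u i| + |λ - μ| ‖u‖`, and `‖u‖ ≤ √n |u i|`.
-/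

open Finset Matrix ContinuousLinearMap

namespace ContinuousLinearMap

variable {𝕜 E : Type*} [RCLike 𝕜] [NormedAddCommGroup E] [InnerProductSpace 𝕜 E] [CompleteSpace E]
  {T : E →L[𝕜] E} {v w : E} {lam mu : 𝕜}

lemma IsStarNormal.adjoint_apply_eq_smul (hT : IsStarNormal T) (hv : T v = lam • v) :
    adjoint T v = (starRingEnd 𝕜) lam • v := by
  have hS : IsStarNormal (T - lam • 1) := by
    refine Commute.isStarNormal_sub ?_
    rw [star_smul, star_one]
    exact (Commute.one_right T).smul_right _
  have := (hS.adjoint_apply_eq_zero_iff v).2 (by simp [hv])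
  rwa [← star_eq_adjoint, star_sub, star_smul, star_one, _root_.sub_apply, sub_eq_zero,
    star_eq_adjoint] at this

lemma IsStarNormal.inner_eq_zero_of_apply_eq_smul (hT : IsStarNormal T) (hv : T v = lam • v)
    (hw : T w = mu • w) (hne : lam ≠ mu) : inner 𝕜 v w = 0 := by
  have h : lam * inner 𝕜 v w = mu * inner 𝕜 v w :=
    calc lam * inner 𝕜 v w = inner 𝕜 (adjoint T v) w := by
          rw [hT.adjoint_apply_eq_smul hv, inner_smul_left, RCLike.conj_conj]
      _ = mu * inner 𝕜 v w := by rw [adjoint_inner_left, hw, inner_smul_right]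
  exact (mul_eq_mul_right_iff.1 h).resolve_left hne

end ContinuousLinearMap

lemma exists_ne_zero_map_eq_zero_norm_apply_sub_smul_le {𝕜 E : Type*} [RCLike 𝕜]
    [NormedAddCommGroup E] [InnerProductSpace 𝕜 E] {T : E →ₗ[𝕜] E} (f : E →ₗ[𝕜] 𝕜) {v w : E}
    {lam mu : 𝕜} (horth : inner 𝕜 v w = 0) (hv0 : v ≠ 0) (hw0 : w ≠ 0) (hv : T v = lam • v)
    (hw : T w = mu • w) :
    ∃ u ≠ 0, f u = 0 ∧ ‖T u - mu • u‖ ≤ ‖lam - mu‖ * ‖u‖ := by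
  by_cases hfw : f w = 0
  · exact ⟨w, hw0, hfw, by simp only [hw, sub_self, norm_zero]; positivity⟩
  have hu0 : f w • v - f v • w ≠ 0 := by
    intro h
    have hvu : inner 𝕜 v (f w • v - f v • w) = f w * ‖v‖ ^ 2 := by
      simp [inner_sub_right, inner_smul_right, horth, inner_self_eq_norm_sq_to_K]
    rw [h, inner_zero_right] at hvu
    simp [hfw, hv0] at hvu
  have hpyth : ‖f w • v - f v • w‖ ^ 2 = ‖f w • v‖ ^ 2 + ‖f v • w‖ ^ 2 := by
    rw [sq, sq, sq, sub_eq_add_neg,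
      norm_add_sq_eq_norm_sq_add_norm_sq_of_inner_eq_zero (𝕜 := 𝕜), norm_neg]
    simp [inner_smul_left, inner_smul_right, horth]
  have hTu : T (f w • v - f v • w) - mu • (f w • v - f v • w) = (lam - mu) • f w • v := by
    simp only [map_sub, map_smul, hv, hw]
    module
  refine ⟨_, hu0, by simp [mul_comm], ?_⟩
  rw [hTu, norm_smul]
  gcongr
  exact (sq_le_sq₀ (norm_nonneg _) (norm_nonneg _)).1
    (hpyth ▸ le_add_of_nonneg_right (sq_nonneg _))

lemma EuclideanSpace.norm_le_sqrt_card_mul {𝕜 ι : Type*} [RCLike 𝕜] [Fintype ι]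
    (u : EuclideanSpace 𝕜 ι) {i : ι} (hmax : ∀ j, ‖u j‖ ≤ ‖u i‖) :
    ‖u‖ ≤ √(Fintype.card ι) * ‖u i‖ := by
  rw [EuclideanSpace.norm_eq, ← Real.sqrt_sq (norm_nonneg (u i)), ← Real.sqrt_mul (by positivity)]
  gcongr
  calc ∑ j, ‖u j‖ ^ 2 ≤ ∑ _j : ι, ‖u i‖ ^ 2 := by gcongr with j; exact hmax j
    _ = _ := by simp

namespace Matrix

variable {𝕜 ι : Type*} [Fintype ι]

lemma isStarNormal_map_ofReal {A : Matrix ι ι ℝ} (hA : A * Aᵀ = Aᵀ * A) :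
    IsStarNormal (A.map (Complex.ofReal ·)) := by
  have hstar : star (A.map (Complex.ofReal ·)) = Aᵀ.map (Complex.ofReal ·) := by
    ext; simp
  have hmap (M N : Matrix ι ι ℝ) : (M * N).map (Complex.ofReal ·) =
      M.map (Complex.ofReal ·) * N.map (Complex.ofReal ·) := Matrix.map_mul (f := Complex.ofRealHom)
  exact ⟨by rw [hstar, Commute, SemiconjBy, ← hmap, ← hmap, hA]⟩

lemma norm_sub_diag_mul_le_of_sum_eq_zero [NormedField 𝕜] [DecidableEq ι] (B : Matrix ι ι 𝕜)
    {u : ι → 𝕜} (hsum : ∑ j, u j = 0) {i : ι} (hmax : ∀ j, ‖u j‖ ≤ ‖u i‖) (c x : 𝕜) :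
    ‖c - B i i‖ * ‖u i‖ ≤
      (‖x‖ + ∑ j ∈ univ.erase i, ‖B i j - x‖) * ‖u i‖ + ‖(B *ᵥ u) i - c * u i‖ := by
  have hrow : (B *ᵥ u) i = B i i * u i + ∑ j ∈ univ.erase i, B i j * u j :=
    (add_sum_erase _ (fun j => B i j * u j) (mem_univ i)).symm
  have hsum' : ∑ j ∈ univ.erase i, u j = -u i := by
    rw [← add_sum_erase _ u (mem_univ i)] at hsum
    linear_combination hsum
  have key : (c - B i i) * u i = ∑ j ∈ univ.erase i, (B i j - x) * u j - x * u i
      - ((B *ᵥ u) i - c * u i) := by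
    simp only [sub_mul, sum_sub_distrib, ← mul_sum, hsum', hrow]
    ring
  rw [← norm_mul, key]
  calc _ ≤ ∑ j ∈ univ.erase i, ‖B i j - x‖ * ‖u j‖ + ‖x‖ * ‖u i‖ + ‖(B *ᵥ u) i - c * u i‖ := by
        refine (norm_sub_le _ _).trans (add_le_add_left ((norm_sub_le _ _).trans ?_) _)
        rw [norm_mul]
        gcongr
        exact (norm_sum_le _ _).trans_eq (by simp_rw [norm_mul])
    _ ≤ _ := by
        rw [add_mul, sum_mul, add_comm (‖x‖ * _)]
        gcongr with j
        exact hmax j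

lemma exists_norm_sub_diag_le_of_sum_eq_zero [RCLike 𝕜] [DecidableEq ι] (B : Matrix ι ι 𝕜)
    {u : EuclideanSpace 𝕜 ι} (hu0 : u ≠ 0) (hsum : ∑ j, u j = 0) {c : 𝕜} {δ : ℝ}
    (hu : ‖toEuclideanCLM (n := ι) (𝕜 := 𝕜) B u - c • u‖ ≤ δ * ‖u‖) :
    ∃ i, ∀ x : 𝕜,
      ‖c - B i i‖ ≤ ‖x‖ + ∑ j ∈ univ.erase i, ‖B i j - x‖ + √(Fintype.card ι) * δ := by
  have : Nonempty ι := by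
    by_contra h
    exact hu0 (by ext j; exact (h ⟨j⟩).elim)
  obtain ⟨i, hmax⟩ := Finite.exists_max fun j => ‖u j‖
  have hui : 0 < ‖u i‖ := by
    by_contra! h
    exact hu0 (by ext j; exact norm_le_zero_iff.1 ((hmax j).trans h))
  have hδ : 0 ≤ δ := nonneg_of_mul_nonneg_left ((norm_nonneg _).trans hu) (norm_pos_iff.2 hu0)
  have herr : ‖(B *ᵥ u) i - c * u i‖ ≤ √(Fintype.card ι) * δ * ‖u i‖ :=
    calc ‖(B *ᵥ u) i - c * u i‖ = ‖(toEuclideanCLM (n := ι) (𝕜 := 𝕜) B u - c • u) i‖ := rfl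
      _ ≤ δ * ‖u‖ := (PiLp.norm_apply_le _ i).trans hu
      _ ≤ δ * (√(Fintype.card ι) * ‖u i‖) := by gcongr; exact u.norm_le_sqrt_card_mul hmax
      _ = _ := by ring
  refine ⟨i, fun x => le_of_mul_le_mul_right ?_ hui⟩
  linarith [norm_sub_diag_mul_le_of_sum_eq_zero B hsum hmax c x]

end Matrix

theorem normal_close_eigenvalues_gershgorin_general (n : ℕ)
    (A : Matrix (Fin n) (Fin n) ℝ)
    (hnormal : A * A.transpose = A.transpose * A)
    (r : Fin n → ℝ)
    (hr : ∀ i : Fin n, r i = sInf (Set.range fun x : ℝ =>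
      |x| + ∑ j ∈ Finset.univ.erase i, |A i j - x|))
    (lam mu : ℂ) (hne : lam ≠ mu)
    (v w : Fin n → ℂ) (hv : v ≠ 0) (hw : w ≠ 0)
    (hAv : (A.map (Complex.ofReal ·)).mulVec v = lam • v)
    (hAw : (A.map (Complex.ofReal ·)).mulVec w = mu • w) :
    ∃ i : Fin n,
      ‖mu - (A i i : ℂ)‖ ≤ r i + Real.sqrt n * ‖lam - mu‖ := by
  set T := toEuclideanCLM (n := Fin n) (𝕜 := ℂ) (A.map (Complex.ofReal ·))
  have hT : IsStarNormal T := (isStarNormal_map_ofReal hnormal).map _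
  have hTv : T (WithLp.toLp 2 v) = lam • WithLp.toLp 2 v := by
    rw [toEuclideanCLM_toLp, hAv, WithLp.toLp_smul]
  have hTw : T (WithLp.toLp 2 w) = mu • WithLp.toLp 2 w := by
    rw [toEuclideanCLM_toLp, hAw, WithLp.toLp_smul]
  obtain ⟨u, hu0, hsum, hu⟩ := exists_ne_zero_map_eq_zero_norm_apply_sub_smul_le
    (T := (T : EuclideanSpace ℂ (Fin n) →ₗ[ℂ] _))
    (∑ j, EuclideanSpace.proj j : EuclideanSpace ℂ (Fin n) →L[ℂ] ℂ)
    (hT.inner_eq_zero_of_apply_eq_smul hTv hTw hne) (by simpa using hv) (by simpa using hw)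
    hTv hTw
  obtain ⟨i, hi⟩ := exists_norm_sub_diag_le_of_sum_eq_zero _ hu0 (by simpa using hsum) hu
  refine ⟨i, ?_⟩
  rw [hr i]
  have hx (x : ℝ) : ‖mu - (A i i : ℂ)‖ - √n * ‖lam - mu‖ ≤
      |x| + ∑ j ∈ Finset.univ.erase i, |A i j - x| := by
    have := hi x
    simp only [Matrix.map_apply, ← Complex.ofReal_sub, Complex.norm_real, Real.norm_eq_abs,
      Fintype.card_fin] at this
    linarith
  have hinf : _ ≤ sInf (Set.range _) := le_ciInf hx
  linarith

theorem normal_close_eigenvalues_gershgorin (n : ℕ) (hn : 3 ≤ n)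
    (A : Matrix (Fin n) (Fin n) ℝ)
    (hnormal : A * A.transpose = A.transpose * A)
    (r : Fin n → ℝ)
    (hr : ∀ i : Fin n, r i = sInf (Set.range fun x : ℝ =>
      |x| + ∑ j ∈ Finset.univ.erase i, |A i j - x|))
    (lam mu : ℂ) (hne : lam ≠ mu)
    (v w : Fin n → ℂ) (hv : v ≠ 0) (hw : w ≠ 0)
    (hAv : (A.map (Complex.ofReal ·)).mulVec v = lam • v)
    (hAw : (A.map (Complex.ofReal ·)).mulVec w = mu • w) :
    ∃ i : Fin n,
      ‖mu - (A i i : ℂ)‖ ≤ r i + Real.sqrt n * ‖lam - mu‖ :=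
  normal_close_eigenvalues_gershgorin_general n A hnormal r hr lam mu hne v w hv hw hAv hAw
end
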